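/- arXiv:1111.2146 — 4 statements merged into one kernel-verified Lean document; each statement's English description precedes it below -/
import Mathlib

section
/- For 0 < k < 1, the quantity E'(k) - k·K'(k) is strictly positive, where E'(k) = E(√(1-k²)) and K'(k) = K(√(1-k²)). -/
open Real

/-- Complete elliptic integral of the first kind. -/
noncomputable def ellK (r : ℝ) : ℝ :=
  ∫ θ in (0:ℝ)..(π/2), 1 / Real.sqrt (1 - r ^ 2 * Real.sin θ ^ 2)

/-- Complete elliptic integral of the second kind. -/
noncomputable def ellE (r : ℝ) : ℝ :=
  ∫ θ in (0:ℝ)..(π/2), Real.sqrt (1 - r ^ 2 * Real.sin θ ^ 2)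

/-- Complementary elliptic integral K'(k) = K(√(1-k²)). -/
noncomputable def ellK' (k : ℝ) : ℝ := ellK (Real.sqrt (1 - k ^ 2))

/-- Complementary elliptic integral E'(k) = E(√(1-k²)). -/
noncomputable def ellE' (k : ℝ) : ℝ := ellE (Real.sqrt (1 - k ^ 2))


/-!
With `Δ'(θ) = √(cos² θ + k² sin² θ)` one has `E' - k K' = ∫ (Δ' - k / Δ')`, whose integrand changes
sign on `[0, π/2]`. Subtracting `(1 - k²)/2` times the derivative of `sin θ cos θ / Δ'`, which
integrates to zero, leaves the integrand `(1 - k)² (cos² θ - k sin² θ)² / (2 Δ'³)`: nonnegative,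
and positive at `θ = 0`.
-/

/-- `Δ'(θ) = √(1 - k'² sin² θ)` with `k'² = 1 - k²`. -/
noncomputable def complDelta (k θ : ℝ) : ℝ := √(cos θ ^ 2 + k ^ 2 * sin θ ^ 2)

section

variable {k : ℝ}

lemma complDelta_sq (θ : ℝ) : complDelta k θ ^ 2 = cos θ ^ 2 + k ^ 2 * sin θ ^ 2 :=
  sq_sqrt (by positivity)

lemma complDelta_pos (hk : k ≠ 0) (θ : ℝ) : 0 < complDelta k θ := by
  refine sqrt_pos.2 ?_
  rcases eq_or_ne (cos θ) 0 with hc | hc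
  · have hs : sin θ ^ 2 = 1 := by nlinarith [sin_sq_add_cos_sq θ]
    rw [hc, hs]
    positivity
  · positivity

lemma continuous_complDelta : Continuous (complDelta k) := by
  unfold complDelta
  fun_prop

lemma continuous_div_complDelta_pow {f : ℝ → ℝ} (hf : Continuous f) (hk : k ≠ 0) (n : ℕ) :
    Continuous fun θ ↦ f θ / complDelta k θ ^ n :=
  hf.div (continuous_complDelta.pow n) fun θ ↦ (pow_pos (complDelta_pos hk θ) n).ne'

lemma sqrt_one_sub_compl_sq_mul_sin_sq (hk : k ^ 2 ≤ 1) (θ : ℝ) :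
    √(1 - √(1 - k ^ 2) ^ 2 * sin θ ^ 2) = complDelta k θ := by
  rw [sq_sqrt (by linarith), complDelta]
  congr 1
  linear_combination -(sin_sq_add_cos_sq θ)

lemma ellE'_eq_integral_complDelta (hk : k ^ 2 ≤ 1) :
    ellE' k = ∫ θ in (0)..(π / 2), complDelta k θ := by
  simp only [ellE', ellE, sqrt_one_sub_compl_sq_mul_sin_sq hk]

lemma ellK'_eq_integral_inv_complDelta (hk : k ^ 2 ≤ 1) :
    ellK' k = ∫ θ in (0)..(π / 2), 1 / complDelta k θ := by
  simp only [ellK', ellK, sqrt_one_sub_compl_sq_mul_sin_sq hk]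

lemma hasDerivAt_complDelta (hk : k ≠ 0) (θ : ℝ) :
    HasDerivAt (complDelta k) ((k ^ 2 - 1) * sin θ * cos θ / complDelta k θ) θ := by
  have hsq : HasDerivAt (fun t ↦ cos t ^ 2 + k ^ 2 * sin t ^ 2)
      (2 * (k ^ 2 - 1) * sin θ * cos θ) θ :=
    (((hasDerivAt_cos θ).fun_pow 2).fun_add
      (((hasDerivAt_sin θ).fun_pow 2).const_mul (k ^ 2))).congr_deriv (by push_cast; ring)
  refine (hsq.sqrt (sqrt_pos.1 (complDelta_pos hk θ)).ne').congr_deriv ?_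
  rw [← complDelta]
  field_simp

lemma hasDerivAt_sin_mul_cos_div_complDelta (hk : k ≠ 0) (θ : ℝ) :
    HasDerivAt (fun t ↦ sin t * cos t / complDelta k t)
      ((cos θ ^ 4 - k ^ 2 * sin θ ^ 4) / complDelta k θ ^ 3) θ := by
  have hΔ := complDelta_pos hk θ
  refine (((hasDerivAt_sin θ).fun_mul (hasDerivAt_cos θ)).fun_div
    (hasDerivAt_complDelta hk θ) hΔ.ne').congr_deriv ?_
  field_simp
  rw [complDelta_sq]
  ring

lemma integral_cos_pow_four_sub_div_complDelta_pow_three (hk : k ≠ 0) :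
    ∫ θ in (0)..(π / 2), (cos θ ^ 4 - k ^ 2 * sin θ ^ 4) / complDelta k θ ^ 3 = 0 := by
  rw [intervalIntegral.integral_eq_sub_of_hasDerivAt
    (fun θ _ ↦ hasDerivAt_sin_mul_cos_div_complDelta hk θ)
    ((continuous_div_complDelta_pow (by fun_prop) hk 3).intervalIntegrable _ _)]
  simp

lemma complDelta_sub_div_complDelta_eq (hk : k ≠ 0) (θ : ℝ) :
    complDelta k θ - k / complDelta k θ
        - (1 - k ^ 2) / 2 * ((cos θ ^ 4 - k ^ 2 * sin θ ^ 4) / complDelta k θ ^ 3)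
      = (1 - k) ^ 2 / 2 * ((cos θ ^ 2 - k * sin θ ^ 2) ^ 2 / complDelta k θ ^ 3) := by
  have hΔ := (complDelta_pos hk θ).ne'
  field_simp
  rw [complDelta_sq]
  linear_combination 2 * k * (cos θ ^ 2 + k ^ 2 * sin θ ^ 2) * sin_sq_add_cos_sq θ

open intervalIntegral in
lemma ellE'_sub_mul_ellK' (hk : k ≠ 0) (hk1 : k ^ 2 ≤ 1) :
    ellE' k - k * ellK' k = (1 - k) ^ 2 / 2 *
      ∫ θ in (0)..(π / 2), (cos θ ^ 2 - k * sin θ ^ 2) ^ 2 / complDelta k θ ^ 3 := by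
  have hΔ : IntervalIntegrable (complDelta k) MeasureTheory.volume 0 (π / 2) :=
    continuous_complDelta.intervalIntegrable _ _
  have hΔinv :
      IntervalIntegrable (fun θ ↦ k / complDelta k θ) MeasureTheory.volume 0 (π / 2) := by
    simpa using (continuous_div_complDelta_pow continuous_const hk 1).intervalIntegrable _ _
  have hF : IntervalIntegrable (fun θ ↦ (cos θ ^ 4 - k ^ 2 * sin θ ^ 4) / complDelta k θ ^ 3)
      MeasureTheory.volume 0 (π / 2) :=
    (continuous_div_complDelta_pow (by fun_prop) hk 3).intervalIntegrable _ _
  rw [ellE'_eq_integral_complDelta hk1, ellK'_eq_integral_inv_complDelta hk1,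
    ← integral_const_mul]
  simp_rw [mul_one_div]
  calc (∫ θ in (0)..(π / 2), complDelta k θ) - ∫ θ in (0)..(π / 2), k / complDelta k θ
      = (∫ θ in (0)..(π / 2), complDelta k θ - k / complDelta k θ) - (1 - k ^ 2) / 2 *
          ∫ θ in (0)..(π / 2), (cos θ ^ 4 - k ^ 2 * sin θ ^ 4) / complDelta k θ ^ 3 := by
        rw [integral_cos_pow_four_sub_div_complDelta_pow_three hk, mul_zero, sub_zero,
          integral_sub hΔ hΔinv]
    _ = ∫ θ in (0)..(π / 2), complDelta k θ - k / complDelta k θ - (1 - k ^ 2) / 2 *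
          ((cos θ ^ 4 - k ^ 2 * sin θ ^ 4) / complDelta k θ ^ 3) := by
        rw [integral_sub (hΔ.sub hΔinv) (hF.const_mul _), integral_const_mul]
    _ = _ := by
        simp_rw [complDelta_sub_div_complDelta_eq hk]
        exact integral_const_mul _ _

end

/-- For 0 < k < 1, E'(k) - k·K'(k) > 0. -/
theorem ellE'_sub_pos : ∀ k ∈ Set.Ioo (0:ℝ) 1, 0 < ellE' k - k * ellK' k := by
  rintro k ⟨hk0, hk1⟩
  rw [ellE'_sub_mul_ellK' hk0.ne' (by nlinarith)]
  refine mul_pos (by nlinarith) ?_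
  simpa using intervalIntegral.integral_lt_integral_of_continuousOn_of_le_of_exists_lt
    (f := fun _ ↦ 0) (by positivity) continuousOn_const
    (continuous_div_complDelta_pow (by fun_prop) hk0.ne' 3).continuousOn
    (fun θ _ ↦ div_nonneg (sq_nonneg _) (pow_pos (complDelta_pos hk0.ne' θ) 3).le)
    ⟨0, ⟨le_rfl, by positivity⟩, by simp [complDelta]⟩
end

section
/- The function ψ(k) = 2(E(k) - (1-k)K(k)) / (E'(k) - k K'(k)) on (0,1) tends to 0 as k → 0⁺. -/
set_option maxHeartbeats 1000000


open Real

/-- The Duren–Pfaltzgraff function ψ. -/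
noncomputable def psi (k : ℝ) : ℝ :=
  2 * (ellE k - (1 - k) * ellK k) / (ellE' k - k * ellK' k)


lemma meas_aux (c : ℝ) : Measurable fun θ : ℝ => Real.sqrt (1 - c * Real.sin θ ^ 2) :=
  Real.continuous_sqrt.measurable.comp
    (measurable_const.sub ((Real.measurable_sin.pow_const 2).const_mul c))

open Filter MeasureTheory intervalIntegral in
lemma ellK_tendsto : Tendsto ellK (nhdsWithin 0 (Set.Ioi 0)) (nhds (π/2)) := by
  have h : Tendsto (fun k : ℝ => ∫ θ in (0:ℝ)..(π/2),
      1 / Real.sqrt (1 - k ^ 2 * Real.sin θ ^ 2)) (nhdsWithin 0 (Set.Ioi 0))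
      (nhds (∫ _ in (0:ℝ)..(π/2), (1:ℝ))) := by
    apply intervalIntegral.tendsto_integral_filter_of_dominated_convergence (μ := MeasureTheory.volume) (fun _ => (2:ℝ))
    · filter_upwards with k
      exact (measurable_const.div (meas_aux (k ^ 2))).aestronglyMeasurable
    · filter_upwards [Ioo_mem_nhdsGT_of_mem (by norm_num : (0:ℝ) ∈ Set.Ico 0 (1/2))] with k hk
      filter_upwards with θ _
      have hs : Real.sin θ ^ 2 ≤ 1 := by
        have := Real.sin_sq_le_one θ; linarith
      have hk2 : k ^ 2 ≤ (1/2:ℝ)^2 := by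
        have h1 := hk.1; have h2 := hk.2
        nlinarith
      have hA : (3/4:ℝ) ≤ 1 - k ^ 2 * Real.sin θ ^ 2 := by nlinarith [sq_nonneg (Real.sin θ), sq_nonneg k]
      have hsq : (1/2:ℝ) ≤ Real.sqrt (1 - k ^ 2 * Real.sin θ ^ 2) := by
        rw [show (1/2:ℝ) = Real.sqrt (1/4) by rw [show (1/4:ℝ) = (1/2)^2 by norm_num, Real.sqrt_sq]; norm_num]
        exact Real.sqrt_le_sqrt (by linarith)
      rw [Real.norm_eq_abs, abs_of_nonneg (by positivity)]
      rw [div_le_iff₀ (by linarith)]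
      nlinarith
    · exact intervalIntegrable_const
    · filter_upwards with θ _
      have : ContinuousAt (fun k : ℝ => 1 / Real.sqrt (1 - k ^ 2 * Real.sin θ ^ 2)) 0 := by
        apply ContinuousAt.div continuousAt_const
        · exact (Real.continuous_sqrt.continuousAt).comp (by fun_prop)
        · simp
      have h0 := this.tendsto
      simp only [ne_eq, OfNat.ofNat_ne_zero, not_false_eq_true, zero_pow, zero_mul, sub_zero,
        Real.sqrt_one, div_one] at h0
      exact h0.mono_left nhdsWithin_le_nhds
  have : (∫ _ in (0:ℝ)..(π/2), (1:ℝ)) = π/2 := by simp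
  rw [this] at h
  exact h

open Filter MeasureTheory intervalIntegral in
lemma ellE_tendsto : Tendsto ellE (nhdsWithin 0 (Set.Ioi 0)) (nhds (π/2)) := by
  have h : Tendsto (fun k : ℝ => ∫ θ in (0:ℝ)..(π/2),
      Real.sqrt (1 - k ^ 2 * Real.sin θ ^ 2)) (nhdsWithin 0 (Set.Ioi 0))
      (nhds (∫ _ in (0:ℝ)..(π/2), (1:ℝ))) := by
    apply intervalIntegral.tendsto_integral_filter_of_dominated_convergence (μ := MeasureTheory.volume) (fun _ => (1:ℝ))
    · filter_upwards with k
      exact (meas_aux (k ^ 2)).aestronglyMeasurable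
    · filter_upwards with k
      filter_upwards with θ _
      rw [Real.norm_eq_abs, abs_of_nonneg (Real.sqrt_nonneg _)]
      exact Real.sqrt_le_one.2 (by nlinarith [sq_nonneg (Real.sin θ), sq_nonneg k])
    · exact intervalIntegrable_const
    · filter_upwards with θ _
      have : ContinuousAt (fun k : ℝ => Real.sqrt (1 - k ^ 2 * Real.sin θ ^ 2)) 0 :=
        (Real.continuous_sqrt.continuousAt).comp (by fun_prop)
      have h0 := this.tendsto
      simp only [ne_eq, OfNat.ofNat_ne_zero, not_false_eq_true, zero_pow, zero_mul, sub_zero,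
        Real.sqrt_one] at h0
      exact h0.mono_left nhdsWithin_le_nhds
  have : (∫ _ in (0:ℝ)..(π/2), (1:ℝ)) = π/2 := by simp
  rw [this] at h
  exact h

open Filter MeasureTheory intervalIntegral in
lemma ellE'_tendsto : Tendsto ellE' (nhdsWithin 0 (Set.Ioi 0)) (nhds 1) := by
  have h : Tendsto (fun k : ℝ => ∫ θ in (0:ℝ)..(π/2),
      Real.sqrt (1 - Real.sqrt (1 - k ^ 2) ^ 2 * Real.sin θ ^ 2)) (nhdsWithin 0 (Set.Ioi 0))
      (nhds (∫ θ in (0:ℝ)..(π/2), Real.cos θ)) := by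
    apply intervalIntegral.tendsto_integral_filter_of_dominated_convergence (μ := MeasureTheory.volume) (fun _ => (1:ℝ))
    · filter_upwards with k
      exact (meas_aux (Real.sqrt (1 - k ^ 2) ^ 2)).aestronglyMeasurable
    · filter_upwards with k
      filter_upwards with θ _
      rw [Real.norm_eq_abs, abs_of_nonneg (Real.sqrt_nonneg _)]
      exact Real.sqrt_le_one.2 (by nlinarith [sq_nonneg (Real.sin θ), sq_nonneg (Real.sqrt (1 - k ^ 2))])
    · exact intervalIntegrable_const
    · filter_upwards with θ hθ
      rw [Set.uIoc_of_le (by positivity)] at hθ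
      have hcos : Real.cos θ ≥ 0 := Real.cos_nonneg_of_mem_Icc ⟨by linarith [hθ.1, Real.pi_pos], hθ.2⟩
      have hc : ContinuousAt (fun k : ℝ =>
          Real.sqrt (1 - Real.sqrt (1 - k ^ 2) ^ 2 * Real.sin θ ^ 2)) 0 := by
        apply (Real.continuous_sqrt.continuousAt).comp
        fun_prop
      have h0 := hc.tendsto
      have hval : Real.sqrt (1 - Real.sqrt (1 - (0:ℝ) ^ 2) ^ 2 * Real.sin θ ^ 2)
          = Real.cos θ := by
        simp only [ne_eq, OfNat.ofNat_ne_zero, not_false_eq_true, zero_pow, sub_zero,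
          Real.sqrt_one, one_pow, one_mul]
        rw [show 1 - Real.sin θ ^ 2 = Real.cos θ ^ 2 by
          have := Real.sin_sq_add_cos_sq θ; linarith]
        rw [Real.sqrt_sq hcos]
      rw [hval] at h0
      exact h0.mono_left nhdsWithin_le_nhds
  have : (∫ θ in (0:ℝ)..(π/2), Real.cos θ) = 1 := by simp
  rw [this] at h
  exact h

open Filter MeasureTheory intervalIntegral in
lemma kellK'_tendsto : Tendsto (fun k => k * ellK' k) (nhdsWithin 0 (Set.Ioi 0)) (nhds 0) := by
  have heq : (fun k : ℝ => k * ellK' k) = fun k : ℝ => ∫ θ in (0:ℝ)..(π/2),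
      k * (1 / Real.sqrt (1 - Real.sqrt (1 - k ^ 2) ^ 2 * Real.sin θ ^ 2)) := by
    funext k
    rw [intervalIntegral.integral_const_mul]
    rfl
  rw [heq]
  have h : Tendsto (fun k : ℝ => ∫ θ in (0:ℝ)..(π/2),
      k * (1 / Real.sqrt (1 - Real.sqrt (1 - k ^ 2) ^ 2 * Real.sin θ ^ 2)))
      (nhdsWithin 0 (Set.Ioi 0)) (nhds (∫ _ in (0:ℝ)..(π/2), (0:ℝ))) := by
    apply intervalIntegral.tendsto_integral_filter_of_dominated_convergence (μ := MeasureTheory.volume) (fun _ => (1:ℝ))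
    · filter_upwards with k
      exact ((measurable_const.div (meas_aux (Real.sqrt (1 - k ^ 2) ^ 2))).const_mul k).aestronglyMeasurable
    · filter_upwards [Ioo_mem_nhdsGT_of_mem (by norm_num : (0:ℝ) ∈ Set.Ico 0 (1/2))] with k hk
      filter_upwards with θ _
      have hk0 : 0 < k := hk.1
      have hk1 : k < 1 := by linarith [hk.2]
      have h1k : Real.sqrt (1 - k ^ 2) ^ 2 = 1 - k ^ 2 :=
        Real.sq_sqrt (by nlinarith)
      rw [h1k]
      have hs : Real.sin θ ^ 2 ≤ 1 := by
        have := Real.sin_sq_le_one θ; linarith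
      have hA : k ^ 2 ≤ 1 - (1 - k ^ 2) * Real.sin θ ^ 2 := by
        nlinarith [sq_nonneg (Real.sin θ)]
      have hsq : k ≤ Real.sqrt (1 - (1 - k ^ 2) * Real.sin θ ^ 2) :=
        Real.le_sqrt_of_sq_le hA
      have hpos : 0 < Real.sqrt (1 - (1 - k ^ 2) * Real.sin θ ^ 2) := lt_of_lt_of_le hk0 hsq
      rw [Real.norm_eq_abs, abs_of_nonneg (by positivity), mul_one_div, div_le_one hpos]
      exact hsq
    · exact intervalIntegrable_const
    · have hne : ∀ᵐ θ : ℝ, θ ≠ π/2 := by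
        refine (MeasureTheory.ae_iff).2 ?_
        simp only [not_not]
        have : {θ : ℝ | θ = π/2} = {π/2} := by ext x; simp
        rw [this]
        exact Real.volume_singleton
      filter_upwards [hne] with θ hθne hθ
      rw [Set.uIoc_of_le (by positivity)] at hθ
      have hcos : 0 < Real.cos θ := by
        apply Real.cos_pos_of_mem_Ioo
        constructor
        · linarith [hθ.1, Real.pi_pos]
        · exact lt_of_le_of_ne hθ.2 hθne
      have hc : ContinuousAt (fun k : ℝ =>
          k * (1 / Real.sqrt (1 - Real.sqrt (1 - k ^ 2) ^ 2 * Real.sin θ ^ 2))) 0 := by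
        apply ContinuousAt.mul continuousAt_id
        apply ContinuousAt.div continuousAt_const
        · exact (Real.continuous_sqrt.continuousAt).comp (by fun_prop)
        · simp only [ne_eq, OfNat.ofNat_ne_zero, not_false_eq_true, zero_pow, sub_zero,
            Real.sqrt_one, one_pow, one_mul]
          rw [show 1 - Real.sin θ ^ 2 = Real.cos θ ^ 2 by
            have := Real.sin_sq_add_cos_sq θ; linarith]
          rw [Real.sqrt_sq hcos.le]
          exact ne_of_gt hcos
      have h0 := hc.tendsto
      simp only [zero_mul] at h0
      exact h0.mono_left nhdsWithin_le_nhds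
  have : (∫ _ in (0:ℝ)..(π/2), (0:ℝ)) = 0 := by simp
  rw [this] at h
  exact h

/-- ψ(k) → 0 as k → 0⁺. -/
theorem psi_tendsto_zero :
    Filter.Tendsto psi (nhdsWithin 0 (Set.Ioi 0)) (nhds 0) := by
  have hid : Filter.Tendsto (fun k : ℝ => k) (nhdsWithin 0 (Set.Ioi 0)) (nhds 0) :=
    Filter.tendsto_id.mono_right nhdsWithin_le_nhds
  have hN : Filter.Tendsto (fun k => 2 * (ellE k - (1 - k) * ellK k))
      (nhdsWithin 0 (Set.Ioi 0)) (nhds (2 * (π/2 - (1 - 0) * (π/2)))) :=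
    Filter.Tendsto.const_mul 2 (ellE_tendsto.sub
      (((tendsto_const_nhds.sub hid)).mul ellK_tendsto))
  have hD : Filter.Tendsto (fun k => ellE' k - k * ellK' k)
      (nhdsWithin 0 (Set.Ioi 0)) (nhds (1 - 0)) :=
    ellE'_tendsto.sub kellK'_tendsto
  have := hN.div hD (by norm_num)
  have heq : (2 * (π/2 - (1 - 0) * (π/2))) / (1 - 0) = 0 := by norm_num
  rw [heq] at this
  exact this
end

section
/- The function ψ(k) = 2(E(k) - (1-k)K(k)) / (E'(k) - k K'(k)) on (0,1) tends to +∞ as k → 1⁻. -/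
open Real

/-!
The numerator of `ψ` stays above `π / 8` near `k = 1`, since `E(k) ≥ π/4` while
`(1 - k) K(k) ≤ (π/2) (1 - k) / √(1 - k²)` is small. The denominator is positive and at most
`(1 - k) K'(k) ≤ (1 - k) π`, using `E ≤ K`. Hence `ψ(k) ≥ 1 / (4 (1 - k))`.

Positivity of the denominator `E(r) - k K(r)`, `r² = 1 - k²`, is the subtle point: the integrand
`√Δ - k / √Δ`, `Δ(θ) = 1 - r² sin² θ`, changes sign, but pairing `θ` with `π/2 - θ` gives
`Δ(θ) Δ(π/2 - θ) = k² + r⁴ sin² θ cos² θ > k²`, and then the paired integrand is positive.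
-/

open Filter Topology Set intervalIntegral

lemma one_sub_sq_mul_sin_sq_pos {r : ℝ} (hr : r ^ 2 < 1) (θ : ℝ) : 0 < 1 - r ^ 2 * sin θ ^ 2 := by
  nlinarith [sin_sq_le_one θ, sq_nonneg r, sq_nonneg (sin θ)]

lemma continuous_sqrt_one_sub_sq_mul_sin_sq (r : ℝ) :
    Continuous fun θ : ℝ => √(1 - r ^ 2 * sin θ ^ 2) := by
  fun_prop

lemma continuous_one_div_sqrt_one_sub_sq_mul_sin_sq {r : ℝ} (hr : r ^ 2 < 1) :
    Continuous fun θ : ℝ => 1 / √(1 - r ^ 2 * sin θ ^ 2) :=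
  continuous_const.div (continuous_sqrt_one_sub_sq_mul_sin_sq r) fun θ =>
    (sqrt_pos.2 (one_sub_sq_mul_sin_sq_pos hr θ)).ne'

lemma ellE_ge (r : ℝ) : π / 2 - r ^ 2 * (π / 4) ≤ ellE r := by
  have hcont : Continuous fun θ : ℝ => 1 - r ^ 2 * sin θ ^ 2 := by fun_prop
  have hsin : Continuous fun θ : ℝ => r ^ 2 * sin θ ^ 2 := by fun_prop
  have hint : ∫ θ in (0 : ℝ)..π / 2, (1 - r ^ 2 * sin θ ^ 2) = π / 2 - r ^ 2 * (π / 4) := by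
    rw [integral_sub intervalIntegrable_const (hsin.intervalIntegrable _ _), integral_const_mul,
      integral_sin_sq]
    simp only [sin_pi_div_two, cos_pi_div_two, sub_zero, sin_zero, cos_zero, mul_zero,
      mul_one, integral_const, smul_eq_mul]
    ring
  rw [ellE, ← hint]
  refine integral_mono_on (by positivity) (hcont.intervalIntegrable _ _)
    ((continuous_sqrt_one_sub_sq_mul_sin_sq r).intervalIntegrable _ _) fun θ _ => ?_
  rcases le_or_gt (1 - r ^ 2 * sin θ ^ 2) 0 with h | h
  · exact h.trans (sqrt_nonneg _)
  · refine le_sqrt_of_sq_le ?_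
    nlinarith [sq_nonneg (r * sin θ)]

lemma ellK_le {r : ℝ} (hr : r ^ 2 < 1) : ellK r ≤ π / 2 / √(1 - r ^ 2) := by
  have hconst : ∫ _ in (0 : ℝ)..π / 2, 1 / √(1 - r ^ 2) = π / 2 / √(1 - r ^ 2) := by
    simp [div_eq_mul_inv]
  rw [ellK, ← hconst]
  refine integral_mono_on (by positivity)
    ((continuous_one_div_sqrt_one_sub_sq_mul_sin_sq hr).intervalIntegrable _ _)
    intervalIntegrable_const fun θ _ => ?_
  exact one_div_le_one_div_of_le (sqrt_pos.2 (by linarith))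
    (sqrt_le_sqrt (by nlinarith [sq_nonneg r, sin_sq_le_one θ]))

lemma ellE_le_ellK {r : ℝ} (hr : r ^ 2 < 1) : ellE r ≤ ellK r := by
  refine integral_mono_on (by positivity)
    ((continuous_sqrt_one_sub_sq_mul_sin_sq r).intervalIntegrable _ _)
    ((continuous_one_div_sqrt_one_sub_sq_mul_sin_sq hr).intervalIntegrable _ _) fun θ _ => ?_
  have hΔ := one_sub_sq_mul_sin_sq_pos hr θ
  rw [le_div_iff₀ (sqrt_pos.2 hΔ), mul_self_sqrt hΔ.le]
  nlinarith [sq_nonneg r, sq_nonneg (sin θ)]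

lemma intervalIntegral_pos_of_add_reflect_pos {f : ℝ → ℝ} {a b : ℝ} (hab : a < b)
    (hf : IntervalIntegrable f MeasureTheory.volume a b)
    (hpos : ∀ x ∈ Ioo a b, 0 < f x + f (a + b - x)) : 0 < ∫ x in a..b, f x := by
  have hrefl : IntervalIntegrable (fun x => f (a + b - x)) MeasureTheory.volume a b := by
    simpa using (hf.comp_sub_left (a + b)).symm
  have hsum : ∫ x in a..b, (f x + f (a + b - x)) = 2 * ∫ x in a..b, f x := by
    rw [integral_add hf hrefl, integral_comp_sub_left]
    simp only [add_sub_cancel_left, add_sub_cancel_right]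
    ring
  have := intervalIntegral_pos_of_pos_on (hf.add hrefl) hpos hab
  linarith

lemma sqrt_sub_div_sqrt_add_pos {A B k : ℝ} (hA : 0 < A) (hB : 0 < B) (hk : k ^ 2 < A * B) :
    0 < (√A - k * (1 / √A)) + (√B - k * (1 / √B)) := by
  have hsA := sqrt_pos.2 hA
  have hsB := sqrt_pos.2 hB
  have hsAB : k < √A * √B := by
    have : (√A * √B) ^ 2 = A * B := by rw [mul_pow, sq_sqrt hA.le, sq_sqrt hB.le]
    nlinarith [mul_pos hsA hsB]
  have heq : (√A - k * (1 / √A)) + (√B - k * (1 / √B))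
      = (√A * √B - k) * (√A + √B) / (√A * √B) := by
    field_simp
    ring
  rw [heq]
  exact div_pos (mul_pos (by linarith) (by positivity)) (by positivity)

lemma ellE_sub_mul_ellK_pos {k r : ℝ} (hk0 : 0 < k) (hk1 : k < 1) (hr : r ^ 2 = 1 - k ^ 2) :
    0 < ellE r - k * ellK r := by
  have hr1 : r ^ 2 < 1 := by nlinarith
  set g : ℝ → ℝ := fun θ => √(1 - r ^ 2 * sin θ ^ 2) - k * (1 / √(1 - r ^ 2 * sin θ ^ 2))
  have hg : Continuous g := (continuous_sqrt_one_sub_sq_mul_sin_sq r).sub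
    (continuous_const.mul (continuous_one_div_sqrt_one_sub_sq_mul_sin_sq hr1))
  have hEK : ellE r - k * ellK r = ∫ θ in (0 : ℝ)..π / 2, g θ := by
    rw [ellE, ellK, ← integral_const_mul, ← integral_sub
      ((continuous_sqrt_one_sub_sq_mul_sin_sq r).intervalIntegrable _ _)
      (((continuous_one_div_sqrt_one_sub_sq_mul_sin_sq hr1).intervalIntegrable _ _).const_mul k)]
  rw [hEK]
  refine intervalIntegral_pos_of_add_reflect_pos (by positivity) (hg.intervalIntegrable _ _)
    fun θ ⟨hθ0, hθ1⟩ => ?_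
  have hs : 0 < sin θ := sin_pos_of_pos_of_lt_pi hθ0 (by linarith [pi_pos])
  have hc : 0 < cos θ := cos_pos_of_mem_Ioo ⟨by linarith [pi_pos], hθ1⟩
  have hr0 : 0 < r ^ 2 := by nlinarith
  simp only [g, zero_add, sin_pi_div_two_sub]
  refine sqrt_sub_div_sqrt_add_pos (one_sub_sq_mul_sin_sq_pos hr1 θ) ?_ ?_
  · nlinarith [sin_sq_add_cos_sq θ]
  · have hprod : (1 - r ^ 2 * sin θ ^ 2) * (1 - r ^ 2 * cos θ ^ 2)
        = k ^ 2 + (r ^ 2 * sin θ * cos θ) ^ 2 := by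
      rw [hr]
      linear_combination (k ^ 2 - 1) * sin_sq_add_cos_sq θ
    rw [hprod]
    have := mul_pos (mul_pos hr0 hs) hc
    nlinarith

lemma sqrt_one_sub_sqrt_one_sub_sq_sq {k : ℝ} (hk0 : 0 ≤ k) (hk1 : k ^ 2 ≤ 1) :
    √(1 - √(1 - k ^ 2) ^ 2) = k := by
  rw [sq_sqrt (by linarith), sub_sub_cancel, sqrt_sq hk0]

lemma ellE'_sub_mul_ellK'_pos {k : ℝ} (hk0 : 0 < k) (hk1 : k < 1) :
    0 < ellE' k - k * ellK' k :=
  ellE_sub_mul_ellK_pos hk0 hk1 (sq_sqrt (by nlinarith))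

lemma ellK'_le {k : ℝ} (hk0 : 0 < k) (hk1 : k ≤ 1) : ellK' k ≤ π / 2 / k := by
  have hr : √(1 - k ^ 2) ^ 2 < 1 := by rw [sq_sqrt (by nlinarith)]; nlinarith
  have := ellK_le hr
  rwa [sqrt_one_sub_sqrt_one_sub_sq_sq hk0.le (by nlinarith)] at this

lemma ellE'_le_ellK' {k : ℝ} (hk0 : 0 < k) (hk1 : k ≤ 1) : ellE' k ≤ ellK' k :=
  ellE_le_ellK (by rw [sq_sqrt (by nlinarith)]; nlinarith)

lemma ellE_sub_one_sub_mul_ellK_ge {k : ℝ} (hk0 : 15 / 17 ≤ k) (hk1 : k < 1) :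
    π / 8 ≤ ellE k - (1 - k) * ellK k := by
  have hk2 : k ^ 2 ≤ 1 := by nlinarith
  have hE : π / 4 ≤ ellE k := by nlinarith [ellE_ge k, mul_le_mul_of_nonneg_right hk2 pi_pos.le]
  have hs : 0 < √(1 - k ^ 2) := sqrt_pos.2 (by nlinarith)
  -- `16 (1 - k)² ≤ (1 - k)(1 + k)` exactly when `k ≥ 15/17`
  have hsmall : 4 * (1 - k) ≤ √(1 - k ^ 2) := le_sqrt_of_sq_le (by nlinarith)
  have hK : (1 - k) * ellK k ≤ π / 8 :=
    calc (1 - k) * ellK k ≤ (1 - k) * (π / 2 / √(1 - k ^ 2)) :=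
          mul_le_mul_of_nonneg_left (ellK_le (by nlinarith)) (by linarith)
      _ = π / 2 * ((1 - k) / √(1 - k ^ 2)) := by ring
      _ ≤ π / 2 * (1 / 4) :=
          mul_le_mul_of_nonneg_left (by rw [div_le_iff₀ hs]; linarith) (by positivity)
      _ = π / 8 := by ring
  linarith

lemma inv_four_mul_one_sub_le_psi {k : ℝ} (hk0 : 15 / 17 ≤ k) (hk1 : k < 1) :
    (4 * (1 - k))⁻¹ ≤ psi k := by
  have hkpos : 0 < k := by linarith
  have hden : ellE' k - k * ellK' k ≤ (1 - k) * π :=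
    calc ellE' k - k * ellK' k ≤ (1 - k) * ellK' k := by
          linarith [ellE'_le_ellK' hkpos hk1.le]
      _ ≤ (1 - k) * π := by
          refine mul_le_mul_of_nonneg_left ((ellK'_le hkpos hk1.le).trans ?_) (by linarith)
          rw [div_le_iff₀ hkpos]
          nlinarith [pi_pos]
  have hrw : (4 * (1 - k))⁻¹ = 2 * (π / 8) / ((1 - k) * π) := by
    field_simp [(by linarith : (1 : ℝ) - k ≠ 0), pi_ne_zero]
    ring
  have hnum := ellE_sub_one_sub_mul_ellK_ge hk0 hk1
  rw [psi, hrw]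
  exact div_le_div₀ (by linarith [pi_pos]) (by linarith) (ellE'_sub_mul_ellK'_pos hkpos hk1) hden

/-- ψ(k) → +∞ as k → 1⁻. -/
theorem psi_tendsto_atTop :
    Filter.Tendsto psi (nhdsWithin 1 (Set.Iio 1)) Filter.atTop := by
  have hlim : Tendsto (fun k : ℝ => (4 * (1 - k))⁻¹) (𝓝[<] 1) atTop := by
    refine tendsto_inv_nhdsGT_zero.comp (tendsto_nhdsWithin_iff.2 ⟨?_, ?_⟩)
    · simpa using (((continuous_const.sub continuous_id).const_mul (4 : ℝ)).tendsto' 1 0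
        (by simp)).mono_left nhdsWithin_le_nhds
    · filter_upwards [self_mem_nhdsWithin] with k (hk : k < 1)
      simp only [mem_Ioi]
      linarith
  refine tendsto_atTop_mono' _ ?_ hlim
  filter_upwards [Ioo_mem_nhdsLT (by norm_num : (15 / 17 : ℝ) < 1)] with k hk
  exact inv_four_mul_one_sub_le_psi hk.1.le hk.2
end

section
/- The function ψ: (0,1) → (0,∞) defined by ψ(k) = 2(E(k) - (1-k)K(k)) / (E'(k) - k K'(k)) is a strictly increasing homeomorphism from (0,1) onto (0,∞); in particular ψ⁻¹: (0,∞) → (0,1) is well-defined and continuous. -/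
/-!
Write `ψ = 2N/D` with `N(k) = E(k) - (1-k)K(k)` and `D(k) = E'(k) - kK'(k)`. Differentiating under
the integral sign gives `N'(k) = E(k)/(1+k) > 0` and `D'(k) = (E'(k) - K'(k))/(1+k) < 0`: in both
cases the `k`-derivative of the integrand is an elliptic integrand plus a multiple of the
`θ`-derivative of `sin θ cos θ / √(1 - m sin²θ)`, which integrates to zero over `[0, π/2]`.
As `N(0) = 0` and `D(1) = 0`, `ψ` is positive, strictly increasing, tends to `0` at `0` and to
`∞` at `1`; by the intermediate value theorem it maps `(0,1)` onto `(0,∞)`, and a strictly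
monotone bijection between intervals is a homeomorphism.
-/

open Real

open Set Filter Topology Function MeasureTheory

theorem hasDerivAt_intervalIntegral_of_continuousOn {F F' : ℝ → ℝ → ℝ} {U : Set ℝ}
    {x₀ a b : ℝ} (hU : IsOpen U) (hx₀ : x₀ ∈ U) (hF : ∀ x ∈ U, Continuous (F x))
    (hF' : ContinuousOn (uncurry F') (U ×ˢ univ))
    (hderiv : ∀ x ∈ U, ∀ t, HasDerivAt (F · t) (F' x t) x) :
    HasDerivAt (fun x => ∫ t in a..b, F x t) (∫ t in a..b, F' x₀ t) x₀ := by
  obtain ⟨ε, hε, hballU⟩ := Metric.isOpen_iff.1 hU x₀ hx₀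
  have hclosedBallU : Metric.closedBall x₀ (ε / 2) ⊆ U :=
    (Metric.closedBall_subset_ball (half_lt_self hε)).trans hballU
  obtain ⟨C, hC⟩ :=
    ((isCompact_closedBall x₀ (ε / 2)).prod isCompact_uIcc).exists_bound_of_continuousOn
      (hF'.mono (prod_mono hclosedBallU (subset_univ (uIcc a b))))
  have hF'x₀ : Continuous (F' x₀) :=
    continuousOn_univ.1 <| (hF'.comp_continuous (f := fun t => (x₀, t)) (by fun_prop)
      fun t => ⟨hx₀, mem_univ t⟩).continuousOn
  refine (intervalIntegral.hasDerivAt_integral_of_dominated_loc_of_deriv_le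
    (bound := fun _ => C) (Metric.ball_mem_nhds x₀ (half_pos hε)) ?_
    ((hF x₀ hx₀).intervalIntegrable a b) hF'x₀.aestronglyMeasurable ?_
    intervalIntegrable_const ?_).2
  · filter_upwards [hU.mem_nhds hx₀] with x hx using (hF x hx).aestronglyMeasurable
  · exact ae_of_all _ fun t ht x hx =>
      hC (x, t) ⟨Metric.ball_subset_closedBall hx, uIoc_subset_uIcc ht⟩
  · exact ae_of_all _ fun t _ x hx =>
      hderiv x (hclosedBallU (Metric.ball_subset_closedBall hx)) t

theorem image_Ioo_eq_Ioi_of_tendsto {f : ℝ → ℝ} {a b c : ℝ} (hab : a < b)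
    (hf : ContinuousOn f (Ioo a b)) (hfc : ∀ x ∈ Ioo a b, c < f x)
    (ha : Tendsto f (𝓝[>] a) (𝓝 c)) (hb : Tendsto f (𝓝[<] b) atTop) :
    f '' Ioo a b = Ioi c := by
  refine (image_subset_iff.2 hfc).antisymm fun y (hy : c < y) => ?_
  obtain ⟨x₁, hx₁y, hx₁⟩ := ((ha.eventually (gt_mem_nhds hy)).and (Ioo_mem_nhdsGT hab)).exists
  obtain ⟨x₂, hx₂y, hx₂⟩ :=
    ((hb.eventually (eventually_gt_atTop y)).and (Ioo_mem_nhdsLT hab)).exists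
  exact isPreconnected_Ioo.intermediate_value hx₁ hx₂ hf ⟨hx₁y.le, hx₂y.le⟩

theorem exists_homeomorph_of_strictMonoOn {α β : Type*} [LinearOrder α] [TopologicalSpace α]
    [OrderTopology α] [LinearOrder β] [TopologicalSpace β] [OrderTopology β] {f : α → β}
    {s : Set α} {t : Set β} [s.OrdConnected] [t.OrdConnected] (hf : StrictMonoOn f s)
    (hst : f '' s = t) : ∃ φ : s ≃ₜ t, ∀ x : s, (φ x : β) = f x := by
  let g : s → t := fun x => ⟨f x, hst ▸ mem_image_of_mem f x.2⟩
  have hg : StrictMono g := fun x y hxy => hf x.2 y.2 hxy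
  have hsurj : Surjective g := by
    rintro ⟨y, hy⟩
    obtain ⟨x, hx, rfl⟩ := hst ▸ hy
    exact ⟨⟨x, hx⟩, rfl⟩
  exact ⟨(hg.orderIsoOfSurjective g hsurj).toHomeomorph, fun x => rfl⟩

noncomputable def ellDelta (m θ : ℝ) : ℝ := √(1 - m * sin θ ^ 2)

@[fun_prop]
theorem Continuous.ellDelta {α : Type*} [TopologicalSpace α] {f g : α → ℝ} (hf : Continuous f)
    (hg : Continuous g) : Continuous fun x => ellDelta (f x) (g x) := by
  unfold _root_.ellDelta
  fun_prop

theorem continuous_ellDelta (m : ℝ) : Continuous (ellDelta m) :=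
  continuous_const.ellDelta continuous_id

theorem one_sub_mul_sin_sq_pos {m : ℝ} (hm : m < 1) (θ : ℝ) : 0 < 1 - m * sin θ ^ 2 := by
  rcases le_or_gt m 0 with hm0 | hm0
  · nlinarith [sq_nonneg (sin θ)]
  · nlinarith [sin_sq_le_one θ]

theorem ellDelta_pos {m : ℝ} (hm : m < 1) (θ : ℝ) : 0 < ellDelta m θ :=
  sqrt_pos.2 (one_sub_mul_sin_sq_pos hm θ)

theorem sq_ellDelta {m : ℝ} (hm : m < 1) (θ : ℝ) : ellDelta m θ ^ 2 = 1 - m * sin θ ^ 2 :=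
  sq_sqrt (one_sub_mul_sin_sq_pos hm θ).le

theorem continuous_div_ellDelta {m : ℝ} (hm : m < 1) (c : ℝ) :
    Continuous fun θ => c / ellDelta m θ :=
  continuous_const.div (continuous_ellDelta m) fun θ => (ellDelta_pos hm θ).ne'

theorem HasDerivAt.ellDelta {f : ℝ → ℝ} {f' x : ℝ} (hf : HasDerivAt f f' x) (hfx : f x < 1)
    (θ : ℝ) :
    HasDerivAt (fun y => ellDelta (f y) θ) (-(f' * Real.sin θ ^ 2) / (2 * ellDelta (f x) θ)) x :=
  ((hf.mul_const (Real.sin θ ^ 2)).const_sub 1).sqrt (one_sub_mul_sin_sq_pos hfx θ).ne'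

noncomputable def ellExactTerm (m θ : ℝ) : ℝ :=
  (1 - 2 * sin θ ^ 2 + m * sin θ ^ 4) / ellDelta m θ ^ 3

theorem continuousAt_ellExactTerm {m θ : ℝ} (hm : m < 1) :
    ContinuousAt (uncurry ellExactTerm) (m, θ) := by
  have := (ellDelta_pos hm θ).ne'
  unfold ellExactTerm
  fun_prop (disch := simpa)

theorem continuous_ellExactTerm {m : ℝ} (hm : m < 1) : Continuous (ellExactTerm m) :=
  continuous_iff_continuousAt.2 fun θ =>
    (continuousAt_ellExactTerm hm).comp (x := θ) (f := fun t => (m, t)) (by fun_prop)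

theorem hasDerivAt_sin_mul_cos_div_ellDelta {m : ℝ} (hm : m < 1) (θ : ℝ) :
    HasDerivAt (fun t => sin t * cos t / ellDelta m t) (ellExactTerm m θ) θ := by
  have hΔ := ellDelta_pos hm θ
  have hΔsq := sq_ellDelta hm θ
  have hsq : HasDerivAt (fun t => 1 - m * sin t ^ 2) (-(m * (2 * sin θ * cos θ))) θ := by
    simpa using (((hasDerivAt_sin θ).pow 2).const_mul m).const_sub 1
  refine HasDerivAt.congr_deriv (f := fun t => sin t * cos t / ellDelta m t)
    (((hasDerivAt_sin θ).fun_mul (hasDerivAt_cos θ)).div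
      (hsq.sqrt (one_sub_mul_sin_sq_pos hm θ).ne') hΔ.ne') ?_
  rw [ellExactTerm, ← ellDelta]
  field_simp
  rw [hΔsq, cos_sq']
  ring

theorem integral_ellExactTerm {m : ℝ} (hm : m < 1) :
    ∫ θ in 0..π / 2, ellExactTerm m θ = 0 := by
  rw [intervalIntegral.integral_eq_sub_of_hasDerivAt
    (fun θ _ => hasDerivAt_sin_mul_cos_div_ellDelta hm θ)
    ((continuous_ellExactTerm hm).intervalIntegrable _ _)]
  simp

theorem ellE_sub_mul_ellK {r : ℝ} (hr : r ^ 2 < 1) (c : ℝ) :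
    ellE r - c * ellK r = ∫ θ in 0..π / 2, (ellDelta (r ^ 2) θ - c / ellDelta (r ^ 2) θ) := by
  rw [ellE, ellK, ← intervalIntegral.integral_const_mul, ← intervalIntegral.integral_sub]
  · simp only [mul_one_div]
    rfl
  · exact (continuous_ellDelta _).intervalIntegrable _ _
  · exact (continuous_const.mul (continuous_div_ellDelta hr 1)).intervalIntegrable _ _

theorem integral_ellDelta_pos {m : ℝ} (hm : m < 1) : 0 < ∫ θ in 0..π / 2, ellDelta m θ :=
  intervalIntegral.intervalIntegral_pos_of_pos ((continuous_ellDelta m).intervalIntegrable _ _)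
    (ellDelta_pos hm) (by positivity)

theorem ellE_pos {r : ℝ} (hr : r ^ 2 < 1) : 0 < ellE r :=
  integral_ellDelta_pos hr

theorem ellE_lt_ellK {r : ℝ} (hr0 : 0 < r) (hr1 : r < 1) : ellE r < ellK r := by
  have hm : r ^ 2 < 1 := by nlinarith
  have hΔ := ellDelta_pos hm
  have hΔle : ∀ θ, ellDelta (r ^ 2) θ ≤ 1 := fun θ =>
    sqrt_le_one.2 (by nlinarith [sq_nonneg (sin θ), sq_nonneg r])
  have hΔlt : ellDelta (r ^ 2) (π / 2) < 1 := by
    rw [ellDelta, sin_pi_div_two]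
    exact (sqrt_lt' one_pos).2 (by nlinarith)
  exact intervalIntegral.integral_lt_integral_of_continuousOn_of_le_of_exists_lt (by positivity)
    (continuous_ellDelta _).continuousOn (continuous_div_ellDelta hm 1).continuousOn
    (fun θ _ => (hΔle θ).trans (one_le_one_div (hΔ θ) (hΔle θ)))
    ⟨π / 2, right_mem_Icc.2 (by positivity), hΔlt.trans (one_lt_one_div (hΔ _) hΔlt)⟩

noncomputable def psiNum (k : ℝ) : ℝ :=
  ∫ θ in 0..π / 2, (ellDelta (k ^ 2) θ - (1 - k) / ellDelta (k ^ 2) θ)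

noncomputable def psiDen (k : ℝ) : ℝ :=
  ∫ θ in 0..π / 2, (ellDelta (1 - k ^ 2) θ - k / ellDelta (1 - k ^ 2) θ)

theorem psi_eq_psiNum_div_psiDen {k : ℝ} (hk : k ∈ Ioo 0 1) :
    psi k = 2 * psiNum k / psiDen k := by
  have hk' : √(1 - k ^ 2) ^ 2 = 1 - k ^ 2 := sq_sqrt (by nlinarith [hk.1, hk.2])
  rw [psi, ellE', ellK', ellE_sub_mul_ellK (by nlinarith [hk.1, hk.2]),
    ellE_sub_mul_ellK (by nlinarith [hk.1, hk.2]), hk', psiNum, psiDen]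

theorem hasDerivAt_psiNum_integrand {x : ℝ} (hx : x ∈ Ioo (-1) 1) (θ : ℝ) :
    HasDerivAt (fun y => ellDelta (y ^ 2) θ - (1 - y) / ellDelta (y ^ 2) θ)
      ((x * ellExactTerm (x ^ 2) θ + ellDelta (x ^ 2) θ) / (1 + x)) x := by
  have hx2 : x ^ 2 < 1 := by nlinarith [hx.1, hx.2]
  have hx1 : 1 + x ≠ 0 := by linarith [hx.1]
  have hΔ := ellDelta_pos hx2 θ
  have hΔsq := sq_ellDelta hx2 θ
  have hd := (hasDerivAt_pow 2 x).ellDelta hx2 θ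
  refine (hd.sub (((hasDerivAt_id x).const_sub 1).div hd hΔ.ne')).congr_deriv ?_
  rw [ellExactTerm]
  field_simp
  rw [show ellDelta (x ^ 2) θ ^ 4 = (ellDelta (x ^ 2) θ ^ 2) ^ 2 by ring, hΔsq]
  simp only [id]
  ring

theorem hasDerivAt_psiDen_integrand {x : ℝ} (hx : 0 < x) (θ : ℝ) :
    HasDerivAt (fun y => ellDelta (1 - y ^ 2) θ - y / ellDelta (1 - y ^ 2) θ)
      ((ellDelta (1 - x ^ 2) θ - 1 / ellDelta (1 - x ^ 2) θ) / (1 + x)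
        - ellExactTerm (1 - x ^ 2) θ) x := by
  have hx2 : 1 - x ^ 2 < 1 := by nlinarith
  have hΔ := ellDelta_pos hx2 θ
  have hΔsq := sq_ellDelta hx2 θ
  have hd := ((hasDerivAt_pow 2 x).const_sub 1).ellDelta hx2 θ
  refine (hd.sub ((hasDerivAt_id x).div hd hΔ.ne')).congr_deriv ?_
  rw [ellExactTerm]
  field_simp
  rw [hΔsq]
  simp only [id]
  ring

theorem hasDerivAt_psiNum {k : ℝ} (hk : k ∈ Ioo (-1) 1) :
    HasDerivAt psiNum (ellE k / (1 + k)) k := by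
  have hcont : ContinuousOn
      (uncurry fun x θ => (x * ellExactTerm (x ^ 2) θ + ellDelta (x ^ 2) θ) / (1 + x))
      (Ioo (-1) 1 ×ˢ univ) := by
    rintro ⟨x, θ⟩ ⟨hx, -⟩
    have hx2 : x ^ 2 < 1 := by nlinarith [hx.1, hx.2]
    have hx1 : 1 + x ≠ 0 := by linarith [hx.1]
    have := (continuousAt_ellExactTerm (θ := θ) hx2).comp (x := (x, θ))
      (f := fun p : ℝ × ℝ => (p.1 ^ 2, p.2)) (by fun_prop)
    exact ContinuousAt.continuousWithinAt (by fun_prop (disch := simpa))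
  have hF (x : ℝ) (hx : x ∈ Ioo (-1 : ℝ) 1) :
      Continuous fun θ => ellDelta (x ^ 2) θ - (1 - x) / ellDelta (x ^ 2) θ :=
    (continuous_ellDelta _).sub (continuous_div_ellDelta (by nlinarith [hx.1, hx.2]) _)
  refine (hasDerivAt_intervalIntegral_of_continuousOn (a := 0) (b := π / 2) isOpen_Ioo hk hF
    hcont fun x hx θ => hasDerivAt_psiNum_integrand hx θ).congr_deriv ?_
  have hk2 : k ^ 2 < 1 := by nlinarith [hk.1, hk.2]
  rw [intervalIntegral.integral_div, intervalIntegral.integral_add,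
    intervalIntegral.integral_const_mul, integral_ellExactTerm hk2, mul_zero, zero_add]
  · rfl
  · exact (continuous_const.mul (continuous_ellExactTerm hk2)).intervalIntegrable _ _
  · exact (continuous_ellDelta _).intervalIntegrable _ _

theorem hasDerivAt_psiDen {k : ℝ} (hk : k ∈ Ioc 0 1) :
    HasDerivAt psiDen ((ellE' k - ellK' k) / (1 + k)) k := by
  have hcont : ContinuousOn (uncurry fun x θ =>
      (ellDelta (1 - x ^ 2) θ - 1 / ellDelta (1 - x ^ 2) θ) / (1 + x)
        - ellExactTerm (1 - x ^ 2) θ) (Ioi 0 ×ˢ univ) := by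
    rintro ⟨x, θ⟩ ⟨hx, -⟩
    have hx2 : 1 - x ^ 2 < 1 := by nlinarith [mem_Ioi.1 hx]
    have hx1 : 1 + x ≠ 0 := by linarith [mem_Ioi.1 hx]
    have hΔ := (ellDelta_pos hx2 θ).ne'
    have := (continuousAt_ellExactTerm (θ := θ) hx2).comp (x := (x, θ))
      (f := fun p : ℝ × ℝ => (1 - p.1 ^ 2, p.2)) (by fun_prop)
    exact ContinuousAt.continuousWithinAt (by fun_prop (disch := simpa))
  have hF (x : ℝ) (hx : x ∈ Ioi (0 : ℝ)) :
      Continuous fun θ => ellDelta (1 - x ^ 2) θ - x / ellDelta (1 - x ^ 2) θ :=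
    (continuous_ellDelta _).sub (continuous_div_ellDelta (by nlinarith [mem_Ioi.1 hx]) _)
  refine (hasDerivAt_intervalIntegral_of_continuousOn (a := 0) (b := π / 2) isOpen_Ioi hk.1 hF
    hcont fun x hx θ => hasDerivAt_psiDen_integrand hx θ).congr_deriv ?_
  have hk2 : 1 - k ^ 2 < 1 := by nlinarith [hk.1]
  have hsqrt : √(1 - k ^ 2) ^ 2 = 1 - k ^ 2 := sq_sqrt (by nlinarith [hk.1, hk.2])
  have hΔint := (continuous_ellDelta (1 - k ^ 2)).intervalIntegrable (μ := volume) 0 (π / 2)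
  have hΔinvint := (continuous_div_ellDelta hk2 1).intervalIntegrable (μ := volume) 0 (π / 2)
  rw [intervalIntegral.integral_sub, intervalIntegral.integral_div,
    intervalIntegral.integral_sub hΔint hΔinvint, integral_ellExactTerm hk2, sub_zero, ellE',
    ellK', ellE, ellK, hsqrt]
  · rfl
  · exact (hΔint.sub hΔinvint).div_const _
  · exact (continuous_ellExactTerm hk2).intervalIntegrable _ _

theorem strictMonoOn_psiNum : StrictMonoOn psiNum (Ioo (-1) 1) := by
  refine strictMonoOn_of_deriv_pos (convex_Ioo _ _)
    (fun k hk => (hasDerivAt_psiNum hk).continuousAt.continuousWithinAt) fun k hk => ?_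
  rw [interior_Ioo] at hk
  rw [(hasDerivAt_psiNum hk).deriv]
  exact div_pos (ellE_pos (by nlinarith [hk.1, hk.2])) (by linarith [hk.1])

theorem strictAntiOn_psiDen : StrictAntiOn psiDen (Ioc 0 1) := by
  refine strictAntiOn_of_deriv_neg (convex_Ioc _ _)
    (fun k hk => (hasDerivAt_psiDen hk).continuousAt.continuousWithinAt) fun k hk => ?_
  rw [interior_Ioc] at hk
  rw [(hasDerivAt_psiDen (Ioo_subset_Ioc_self hk)).deriv]
  refine div_neg_of_neg_of_pos (sub_neg.2 (ellE_lt_ellK ?_ ?_)) (by linarith [hk.1])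
  · exact sqrt_pos.2 (by nlinarith [hk.1, hk.2])
  · exact (sqrt_lt' one_pos).2 (by nlinarith [hk.1, hk.2])

theorem psiNum_zero : psiNum 0 = 0 := by
  simp [psiNum, ellDelta]

theorem psiDen_one : psiDen 1 = 0 := by
  simp [psiDen, ellDelta]

theorem psiNum_pos {k : ℝ} (hk : k ∈ Ioo 0 1) : 0 < psiNum k :=
  psiNum_zero ▸ strictMonoOn_psiNum ⟨by norm_num, by norm_num⟩ ⟨by linarith [hk.1], hk.2⟩ hk.1

theorem psiDen_pos {k : ℝ} (hk : k ∈ Ioo 0 1) : 0 < psiDen k :=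
  psiDen_one ▸ strictAntiOn_psiDen (Ioo_subset_Ioc_self hk) ⟨one_pos, le_rfl⟩ hk.2

theorem psi_pos {k : ℝ} (hk : k ∈ Ioo 0 1) : 0 < psi k := by
  rw [psi_eq_psiNum_div_psiDen hk]
  exact div_pos (mul_pos two_pos (psiNum_pos hk)) (psiDen_pos hk)

theorem strictMonoOn_psi : StrictMonoOn psi (Ioo 0 1) := by
  intro a ha b hb hab
  rw [psi_eq_psiNum_div_psiDen ha, psi_eq_psiNum_div_psiDen hb]
  have hNum := strictMonoOn_psiNum ⟨by linarith [ha.1], ha.2⟩ ⟨by linarith [hb.1], hb.2⟩ hab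
  have hDen := strictAntiOn_psiDen (Ioo_subset_Ioc_self ha) (Ioo_subset_Ioc_self hb) hab
  exact div_lt_div₀ (by linarith) hDen.le (by linarith [psiNum_pos hb]) (psiDen_pos hb)

theorem continuousOn_psi : ContinuousOn psi (Ioo 0 1) := by
  refine ContinuousOn.congr (f := fun k => 2 * psiNum k / psiDen k) (fun k hk => ?_)
    fun k hk => psi_eq_psiNum_div_psiDen hk
  exact ((continuousAt_const.mul (hasDerivAt_psiNum ⟨by linarith [hk.1], hk.2⟩).continuousAt).div
    (hasDerivAt_psiDen (Ioo_subset_Ioc_self hk)).continuousAt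
    (psiDen_pos hk).ne').continuousWithinAt

theorem tendsto_psi_nhdsGT_zero : Tendsto psi (𝓝[>] 0) (𝓝 0) := by
  have hhalf : (1 / 2 : ℝ) ∈ Ioo 0 1 := by norm_num
  have hNum : Tendsto psiNum (𝓝 0) (𝓝 0) := by
    simpa only [psiNum_zero] using (hasDerivAt_psiNum (k := 0) (by norm_num)).continuousAt.tendsto
  have hbound : Tendsto (fun k => 2 * psiNum k / psiDen (1 / 2)) (𝓝[>] 0) (𝓝 0) := by
    simpa using ((hNum.const_mul 2).div_const (psiDen (1 / 2))).mono_left nhdsWithin_le_nhds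
  refine tendsto_of_tendsto_of_tendsto_of_le_of_le' tendsto_const_nhds hbound ?_ ?_
  · filter_upwards [Ioo_mem_nhdsGT one_pos] with k hk using (psi_pos hk).le
  · filter_upwards [Ioo_mem_nhdsGT (by norm_num : (0 : ℝ) < 1 / 2)] with k hk
    have hk1 : k ∈ Ioo 0 1 := ⟨hk.1, by linarith [hk.2]⟩
    rw [psi_eq_psiNum_div_psiDen hk1]
    exact div_le_div_of_nonneg_left (by linarith [psiNum_pos hk1]) (psiDen_pos hhalf)
      (strictAntiOn_psiDen (Ioo_subset_Ioc_self hk1) (Ioo_subset_Ioc_self hhalf) hk.2).le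

theorem tendsto_psi_nhdsLT_one : Tendsto psi (𝓝[<] 1) atTop := by
  have hhalf : (1 / 2 : ℝ) ∈ Ioo 0 1 := by norm_num
  have hDen : Tendsto psiDen (𝓝[<] 1) (𝓝[>] 0) := by
    refine tendsto_nhdsWithin_of_tendsto_nhds_of_eventually_within _ ?_ ?_
    · simpa only [psiDen_one] using (hasDerivAt_psiDen (k := 1) ⟨one_pos, le_rfl⟩).continuousAt
        |>.tendsto.mono_left nhdsWithin_le_nhds
    · filter_upwards [Ioo_mem_nhdsLT one_pos] with k hk using psiDen_pos hk
  refine tendsto_atTop_mono' _ ?_ ((tendsto_inv_nhdsGT_zero.comp hDen).const_mul_atTop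
    (by linarith [psiNum_pos hhalf] : 0 < 2 * psiNum (1 / 2)))
  filter_upwards [Ioo_mem_nhdsLT (by norm_num : (1 / 2 : ℝ) < 1)] with k hk
  have hk1 : k ∈ Ioo 0 1 := ⟨by linarith [hk.1], hk.2⟩
  have hNum := strictMonoOn_psiNum ⟨by norm_num, by norm_num⟩ ⟨by linarith [hk.1], hk.2⟩ hk.1
  rw [psi_eq_psiNum_div_psiDen hk1, div_eq_mul_inv]
  exact mul_le_mul_of_nonneg_right (by linarith) (inv_nonneg.2 (psiDen_pos hk1).le)

/-- ψ is a strictly increasing homeomorphism of (0,1) onto (0,∞); in particular its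
inverse is well-defined and continuous. -/
theorem psi_strictMono_homeomorph :
    StrictMonoOn psi (Set.Ioo 0 1) ∧ ContinuousOn psi (Set.Ioo 0 1) ∧
    psi '' Set.Ioo 0 1 = Set.Ioi 0 ∧
    ∃ φ : Set.Ioo (0:ℝ) 1 ≃ₜ Set.Ioi (0:ℝ),
      (∀ k : Set.Ioo (0:ℝ) 1, (φ k : ℝ) = psi k) ∧
      Continuous (fun y : Set.Ioi (0:ℝ) => (φ.symm y : ℝ)) := by
  have himage : psi '' Ioo 0 1 = Ioi 0 :=
    image_Ioo_eq_Ioi_of_tendsto one_pos continuousOn_psi (fun k hk => psi_pos hk)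
      tendsto_psi_nhdsGT_zero tendsto_psi_nhdsLT_one
  obtain ⟨φ, hφ⟩ := exists_homeomorph_of_strictMonoOn strictMonoOn_psi himage
  exact ⟨strictMonoOn_psi, continuousOn_psi, himage, φ, hφ,
    continuous_subtype_val.comp φ.symm.continuous⟩
end
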